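/- arXiv:2209.09119 — 3 statements merged into one kernel-verified Lean document; each statement's English description precedes it below -/
import Mathlib

section
/- Let x̄ ∈ S* and q > 0, and suppose the ball B(x̄, δ) lies in 𝒪 for small δ. If ∂F is q-subregular at x̄ for 0, then the residual mapping R is min{q,1}-subregular at x̄ for 0; that is, there exist ν > 0 and δ > 0 such that dist(x, S*) ≤ ν ‖R(x)‖^{min{q,1}} for all x ∈ B(x̄, δ). -/
open Set Metric Filter Bornology
open scoped RealInnerProductSpace Topology ENNReal

noncomputable section

/-- Euclidean space `ℝⁿ`. -/
abbrev Eu (n : ℕ) : Type := EuclideanSpace ℝ (Fin n)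

/-- The convex subdifferential of an extended-real-valued function `g` at `x`. -/
def subdiff {n : ℕ} (g : Eu n → EReal) (x : Eu n) : Set (Eu n) :=
  {v | ∀ z : Eu n, g x + ((⟪v, z - x⟫ : ℝ) : EReal) ≤ g z}

/-- `g` is proper: not identically `+∞` and nowhere `-∞`. -/
def ProperFun {n : ℕ} (g : Eu n → EReal) : Prop :=
  (∃ x, g x ≠ ⊤) ∧ ∀ x, g x ≠ ⊥

/-- `g` is convex. -/
def ConvexFun {n : ℕ} (g : Eu n → EReal) : Prop :=
  ∀ x z : Eu n, ∀ a c : ℝ, 0 ≤ a → 0 ≤ c → a + c = 1 →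
    g (a • x + c • z) ≤ (a : EReal) * g x + (c : EReal) * g z

/-- The effective domain of `g`. -/
def domg {n : ℕ} (g : Eu n → EReal) : Set (Eu n) := {x | g x ≠ ⊤}

/-- `prox` is the proximal mapping of `g` (with parameter 1). -/
def IsProxOf {n : ℕ} (g : Eu n → EReal) (prox : Eu n → Eu n) : Prop :=
  ∀ z u : Eu n,
    ((‖prox z - z‖ ^ 2 / 2 : ℝ) : EReal) + g (prox z)
      ≤ ((‖u - z‖ ^ 2 / 2 : ℝ) : EReal) + g u

/-- `f(x) = ψ(Ax - b)`. -/
def fval {n m : ℕ} (ψ : Eu m → ℝ) (A : Eu n →L[ℝ] Eu m) (b : Eu m) (x : Eu n) : ℝ :=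
  ψ (A x - b)

/-- `∇f(x) = Aᵀ ∇ψ(Ax - b)`. -/
def gradfval {n m : ℕ} (gradψ : Eu m → Eu m) (A : Eu n →L[ℝ] Eu m) (b : Eu m)
    (x : Eu n) : Eu n :=
  ContinuousLinearMap.adjoint A (gradψ (A x - b))

/-- `∇²f(x) = Aᵀ ∇²ψ(Ax - b) A`. -/
def hessfval {n m : ℕ} (hessψ : Eu m → (Eu m →L[ℝ] Eu m)) (A : Eu n →L[ℝ] Eu m) (b : Eu m)
    (x : Eu n) : Eu n →L[ℝ] Eu n :=
  (ContinuousLinearMap.adjoint A).comp ((hessψ (A x - b)).comp A)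

/-- `F = f + g`, extended-real-valued. -/
def Fval {n m : ℕ} (ψ : Eu m → ℝ) (A : Eu n →L[ℝ] Eu m) (b : Eu m) (g : Eu n → EReal)
    (x : Eu n) : EReal :=
  ((fval ψ A b x : ℝ) : EReal) + g x

/-- The residual mapping `R(x) = x - prox_g(x - ∇f(x))`. -/
def Rres {n m : ℕ} (gradψ : Eu m → Eu m) (A : Eu n →L[ℝ] Eu m) (b : Eu m)
    (prox : Eu n → Eu n) (x : Eu n) : Eu n :=
  x - prox (x - gradfval gradψ A b x)

/-- The KKT residual `r(x) = ‖R(x)‖`. -/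
def rres {n m : ℕ} (gradψ : Eu m → Eu m) (A : Eu n →L[ℝ] Eu m) (b : Eu m)
    (prox : Eu n → Eu n) (x : Eu n) : ℝ :=
  ‖Rres gradψ A b prox x‖

/-- The subdifferential `∂F(x) = ∇f(x) + ∂g(x)`. -/
def subF {n m : ℕ} (gradψ : Eu m → Eu m) (A : Eu n →L[ℝ] Eu m) (b : Eu m)
    (g : Eu n → EReal) (x : Eu n) : Set (Eu n) :=
  {u | u - gradfval gradψ A b x ∈ subdiff g x}

/-- The stationary point set `S* = {x : 0 ∈ ∂F(x)}`. -/
def SstarSet {n m : ℕ} (gradψ : Eu m → Eu m) (A : Eu n →L[ℝ] Eu m) (b : Eu m)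
    (g : Eu n → EReal) : Set (Eu n) :=
  {x | (0 : Eu n) ∈ subF gradψ A b g x}

/-- Smallest eigenvalue of a (self-adjoint) operator, via the Rayleigh quotient. -/
def lamMin {m : ℕ} (T : Eu m →L[ℝ] Eu m) : ℝ :=
  sInf ((fun v => ⟪T v, v⟫) '' Metric.sphere (0 : Eu m) 1)

/-- The strong stationary point set `X* = {x ∈ S* : ∇²ψ(Ax-b) ⪰ 0}`. -/
def XstarSet {n m : ℕ} (gradψ : Eu m → Eu m) (hessψ : Eu m → (Eu m →L[ℝ] Eu m))
    (A : Eu n →L[ℝ] Eu m) (b : Eu m) (g : Eu n → EReal) : Set (Eu n) :=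
  {x | x ∈ SstarSet gradψ A b g ∧ ∀ v : Eu m, 0 ≤ ⟪hessψ (A x - b) v, v⟫}

/-- `ψ` is twice continuously differentiable on `A(O) - b`, with gradient `gradψ`
and Hessian `hessψ` there. -/
def TwiceDiffOn {n m : ℕ} (ψ : Eu m → ℝ) (gradψ : Eu m → Eu m)
    (hessψ : Eu m → (Eu m →L[ℝ] Eu m)) (A : Eu n →L[ℝ] Eu m) (b : Eu m)
    (O : Set (Eu n)) : Prop :=
  (∀ u ∈ (fun z : Eu n => A z - b) '' O, HasGradientAt ψ (gradψ u) u) ∧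
  (∀ u ∈ (fun z : Eu n => A z - b) '' O, HasFDerivAt gradψ (hessψ u) u) ∧
  ContinuousOn gradψ ((fun z : Eu n => A z - b) '' O) ∧
  ContinuousOn hessψ ((fun z : Eu n => A z - b) '' O)

/-- Assumption 1.1 of the paper, together with the data of the proximal map of `g`. -/
def BasicAssumptions {n m : ℕ} (ψ : Eu m → ℝ) (gradψ : Eu m → Eu m)
    (hessψ : Eu m → (Eu m →L[ℝ] Eu m)) (A : Eu n →L[ℝ] Eu m) (b : Eu m)
    (g : Eu n → EReal) (prox : Eu n → Eu n) (O : Set (Eu n)) : Prop :=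
  IsOpen O ∧ domg g ⊆ O ∧ TwiceDiffOn ψ gradψ hessψ A b O ∧
  ProperFun g ∧ ConvexFun g ∧ LowerSemicontinuous g ∧ ContinuousOn g (domg g) ∧
  IsProxOf g prox ∧
  (∃ c : ℝ, ∀ x, (c : EReal) ≤ Fval ψ A b g x) ∧
  (∀ c : ℝ, Bornology.IsBounded {x | Fval ψ A b g x ≤ (c : EReal)})

/-- The regularized Hessian `G_k = ∇²f(x_k) + a₁ [−λ_min(∇²ψ(Ax_k−b))]₊ AᵀA + μ I`. -/
def GkOf {n m : ℕ} (hessψ : Eu m → (Eu m →L[ℝ] Eu m)) (A : Eu n →L[ℝ] Eu m) (b : Eu m)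
    (a₁ μ : ℝ) (xk : Eu n) : Eu n →L[ℝ] Eu n :=
  hessfval hessψ A b xk
    + (a₁ * max 0 (-(lamMin (hessψ (A xk - b))))) • ((ContinuousLinearMap.adjoint A).comp A)
    + μ • (ContinuousLinearMap.id ℝ (Eu n))

/-- `R_k(y) = y - prox_g(y - ∇f(x_k) - G(y - x_k))`. -/
def RkRes {n m : ℕ} (gradψ : Eu m → Eu m) (A : Eu n →L[ℝ] Eu m) (b : Eu m)
    (prox : Eu n → Eu n) (G : Eu n →L[ℝ] Eu n) (xk yy : Eu n) : Eu n :=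
  yy - prox (yy - gradfval gradψ A b xk - G (yy - xk))

/-- `r_k(y) = ‖R_k(y)‖`. -/
def rkRes {n m : ℕ} (gradψ : Eu m → Eu m) (A : Eu n →L[ℝ] Eu m) (b : Eu m)
    (prox : Eu n → Eu n) (G : Eu n →L[ℝ] Eu n) (xk yy : Eu n) : ℝ :=
  ‖RkRes gradψ A b prox G xk yy‖

/-- The subproblem objective
`Θ_k(x) = f(x_k) + ⟨∇f(x_k), x - x_k⟩ + (1/2)⟨x - x_k, G (x - x_k)⟩ + g(x)`. -/
def ThetaK {n m : ℕ} (ψ : Eu m → ℝ) (gradψ : Eu m → Eu m) (A : Eu n →L[ℝ] Eu m) (b : Eu m)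
    (g : Eu n → EReal) (G : Eu n →L[ℝ] Eu n) (xk x : Eu n) : EReal :=
  ((fval ψ A b xk + ⟪gradfval gradψ A b xk, x - xk⟫
      + ⟪x - xk, G (x - xk)⟫ / 2 : ℝ) : EReal) + g x

/-- The Armijo descent condition `F(x_k) - F(x_k + βᵐ d) ≥ σ βᵐ μ ‖d‖²`. -/
def ArmijoOK {n m : ℕ} (ψ : Eu m → ℝ) (A : Eu n →L[ℝ] Eu m) (b : Eu m) (g : Eu n → EReal)
    (σ β μ : ℝ) (xk dk : Eu n) (M : ℕ) : Prop :=
  Fval ψ A b g (xk + β ^ M • dk) + ((σ * β ^ M * μ * ‖dk‖ ^ 2 : ℝ) : EReal)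
    ≤ Fval ψ A b g xk

/-- `hessψ` is strictly continuous at `u0` relative to `S` with modulus `Lψ`. -/
def StrictContAt {m : ℕ} (hessψ : Eu m → (Eu m →L[ℝ] Eu m)) (S : Set (Eu m)) (u0 : Eu m)
    (Lψ : ℝ) : Prop :=
  0 ≤ Lψ ∧ ∃ δ₀ > (0 : ℝ), ∀ z ∈ Metric.closedBall u0 δ₀ ∩ S,
    ∀ z' ∈ Metric.closedBall u0 δ₀ ∩ S, ‖hessψ z - hessψ z'‖ ≤ Lψ * ‖z - z'‖

/-- The KL property of `F = f + g` at `xbar` (general desingularizing function `φ`). -/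
def KLatGen {n m : ℕ} (ψ : Eu m → ℝ) (gradψ : Eu m → Eu m) (A : Eu n →L[ℝ] Eu m) (b : Eu m)
    (g : Eu n → EReal) (xbar : Eu n) : Prop :=
  ∃ δ > (0 : ℝ), ∃ ϖ : EReal, 0 < ϖ ∧ ∃ φ dφ : ℝ → ℝ,
    φ 0 = 0 ∧
    ContinuousOn φ {t : ℝ | 0 ≤ t ∧ (t : EReal) < ϖ} ∧
    ConcaveOn ℝ {t : ℝ | 0 ≤ t ∧ (t : EReal) < ϖ} φ ∧
    (∀ t : ℝ, 0 < t → (t : EReal) < ϖ → HasDerivAt φ (dφ t) t ∧ 0 < dφ t) ∧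
    ∀ z ∈ Metric.closedBall xbar δ,
      Fval ψ A b g xbar < Fval ψ A b g z → Fval ψ A b g z < Fval ψ A b g xbar + ϖ →
        ∀ v ∈ subF gradψ A b g z,
          1 ≤ dφ ((Fval ψ A b g z - Fval ψ A b g xbar).toReal) * ‖v‖

/-- The KL property of `F = f + g` with exponent `θ` at `xbar`. -/
def KLexpAt {n m : ℕ} (ψ : Eu m → ℝ) (gradψ : Eu m → Eu m) (A : Eu n →L[ℝ] Eu m) (b : Eu m)
    (g : Eu n → EReal) (θ : ℝ) (xbar : Eu n) : Prop :=
  ∃ δ > (0 : ℝ), ∃ ϖ : EReal, 0 < ϖ ∧ ∃ c > (0 : ℝ),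
    ∀ z ∈ Metric.closedBall xbar δ,
      Fval ψ A b g xbar < Fval ψ A b g z → Fval ψ A b g z < Fval ψ A b g xbar + ϖ →
        ∀ v ∈ subF gradψ A b g z,
          1 ≤ c * (1 - θ) * ((Fval ψ A b g z - Fval ψ A b g xbar).toReal) ^ (-θ) * ‖v‖

end

/-!
Write `p = prox_g (z - ∇f z)`, so that `‖z - p‖ = r z`. The optimality condition of the proximal
problem makes `(z - p) + ∇f p - ∇f z` a subgradient of `F` at `p`, of norm at most `(1 + L) r z`,
where `L` is a local Lipschitz constant of `∇f` (which is `C¹` because `ψ` is `C²`). The proximal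
gradient step is continuous and fixes `x̄`, so for `z` near `x̄` the point `p` lies in the
neighbourhood where `∂F` is subregular, whence
`dist(z, S*) ≤ dist(p, S*) + r z ≤ κ (1 + L)^q (r z)^q + r z`; once `r z ≤ 1`, both powers of `r z`
are at most `(r z)^(min q 1)`.
-/

theorem nonneg_of_forall_nonneg_add_mul {c B : ℝ} (h : ∀ t ∈ Ioc (0 : ℝ) 1, 0 ≤ c + t * B) :
    0 ≤ c := by
  have hlim : Tendsto (fun t : ℝ => c + t * B) (𝓝[>] 0) (𝓝 c) := by
    have : Continuous fun t : ℝ => c + t * B := by fun_prop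
    exact (this.tendsto' 0 c (by simp)).mono_left nhdsWithin_le_nhds
  exact ge_of_tendsto hlim (eventually_of_mem (Ioc_mem_nhdsGT one_pos) h)

section Prox

variable {n : ℕ} {g : Eu n → EReal} {prox : Eu n → Eu n}

theorem ProperFun.coe_toReal (hp : ProperFun g) {x : Eu n} (hx : g x ≠ ⊤) :
    ((g x).toReal : EReal) = g x :=
  EReal.coe_toReal hx (hp.2 x)

theorem ProperFun.ne_top_of_mem_subdiff (hp : ProperFun g) {x v : Eu n}
    (hv : v ∈ subdiff g x) : g x ≠ ⊤ := by
  obtain ⟨x₀, hx₀⟩ := hp.1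
  intro hx
  have h := hv x₀
  rw [hx, EReal.top_add_coe, top_le_iff] at h
  exact hx₀ h

theorem ProperFun.mem_subdiff_iff (hp : ProperFun g) {x v : Eu n} (hx : g x ≠ ⊤) :
    v ∈ subdiff g x ↔ ∀ z, g z ≠ ⊤ → (g x).toReal + ⟪v, z - x⟫ ≤ (g z).toReal := by
  refine ⟨fun hv z hz => ?_, fun h z => ?_⟩
  · have := hv z
    rwa [← hp.coe_toReal hx, ← hp.coe_toReal hz, ← EReal.coe_add, EReal.coe_le_coe_iff] at this
  · by_cases hz : g z = ⊤
    · rw [hz]; exact le_top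
    · rw [← hp.coe_toReal hx, ← hp.coe_toReal hz, ← EReal.coe_add, EReal.coe_le_coe_iff]
      exact h z hz

theorem ProperFun.subdiff_monotone (hp : ProperFun g) {x₁ x₂ v₁ v₂ : Eu n}
    (h₁ : v₁ ∈ subdiff g x₁) (h₂ : v₂ ∈ subdiff g x₂) : 0 ≤ ⟪v₁ - v₂, x₁ - x₂⟫ := by
  have hx₁ := hp.ne_top_of_mem_subdiff h₁
  have hx₂ := hp.ne_top_of_mem_subdiff h₂
  have i₁ := (hp.mem_subdiff_iff hx₁).1 h₁ x₂ hx₂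
  have i₂ := (hp.mem_subdiff_iff hx₂).1 h₂ x₁ hx₁
  have : ⟪v₁ - v₂, x₁ - x₂⟫ = -⟪v₁, x₂ - x₁⟫ - ⟪v₂, x₁ - x₂⟫ := by
    rw [inner_sub_left, ← inner_neg_right, neg_sub]
  linarith

theorem IsProxOf.ne_top (hprox : IsProxOf g prox) (hp : ProperFun g) (z : Eu n) :
    g (prox z) ≠ ⊤ := by
  obtain ⟨x₀, hx₀⟩ := hp.1
  intro h
  have h₀ := hprox z x₀
  rw [h, EReal.coe_add_top, ← hp.coe_toReal hx₀, ← EReal.coe_add, top_le_iff] at h₀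
  exact EReal.coe_ne_top _ h₀

theorem IsProxOf.sub_mem_subdiff (hprox : IsProxOf g prox) (hp : ProperFun g) (hc : ConvexFun g)
    (z : Eu n) : z - prox z ∈ subdiff g (prox z) := by
  set u := prox z
  have hu := hprox.ne_top hp z
  refine (hp.mem_subdiff_iff hu).2 fun w hw => ?_
  set gu := (g u).toReal
  set gw := (g w).toReal
  -- compare `u` with the points `u + t (w - u)` of the segment and let `t → 0⁺`
  suffices ∀ t ∈ Ioc (0 : ℝ) 1, 0 ≤ ⟪u - z, w - u⟫ + (gw - gu) + t * (‖w - u‖ ^ 2 / 2) by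
    have h := nonneg_of_forall_nonneg_add_mul this
    rw [← neg_sub z u, inner_neg_left] at h
    linarith
  rintro t ⟨ht₀, ht₁⟩
  have hconv : g ((1 - t) • u + t • w) ≤ (((1 - t) * gu + t * gw : ℝ) : EReal) := by
    have := hc u w (1 - t) t (by linarith) ht₀.le (by ring)
    rwa [← hp.coe_toReal hu, ← hp.coe_toReal hw, ← EReal.coe_mul, ← EReal.coe_mul,
      ← EReal.coe_add] at this
  have hmin := (hprox z ((1 - t) • u + t • w)).trans (add_le_add le_rfl hconv)
  rw [← hp.coe_toReal hu, ← EReal.coe_add, ← EReal.coe_add, EReal.coe_le_coe_iff] at hmin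
  have hseg : (1 - t) • u + t • w - z = (u - z) + t • (w - u) := by module
  rw [hseg, norm_add_sq_real, real_inner_smul_right, norm_smul, Real.norm_of_nonneg ht₀.le]
    at hmin
  nlinarith

theorem IsProxOf.eq_of_sub_mem_subdiff (hprox : IsProxOf g prox) (hp : ProperFun g)
    (hc : ConvexFun g) {w u : Eu n} (hu : w - u ∈ subdiff g u) : prox w = u := by
  have h := hp.subdiff_monotone (hprox.sub_mem_subdiff hp hc w) hu
  rw [sub_sub_sub_cancel_left, ← neg_sub u, inner_neg_right, real_inner_self_eq_norm_sq] at h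
  have : ‖u - prox w‖ = 0 := by nlinarith [norm_nonneg (u - prox w)]
  exact (sub_eq_zero.1 (norm_eq_zero.1 this)).symm

theorem IsProxOf.lipschitzWith_one (hprox : IsProxOf g prox) (hp : ProperFun g)
    (hc : ConvexFun g) : LipschitzWith 1 prox := by
  refine LipschitzWith.mk_one fun z₁ z₂ => ?_
  rw [dist_eq_norm, dist_eq_norm]
  have h := hp.subdiff_monotone (hprox.sub_mem_subdiff hp hc z₁) (hprox.sub_mem_subdiff hp hc z₂)
  have hsplit : z₁ - prox z₁ - (z₂ - prox z₂) = (z₁ - z₂) - (prox z₁ - prox z₂) := by abel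
  rw [hsplit, inner_sub_left, real_inner_self_eq_norm_sq] at h
  have hcs := real_inner_le_norm (z₁ - z₂) (prox z₁ - prox z₂)
  rcases (norm_nonneg (prox z₁ - prox z₂)).eq_or_lt with hd | hd
  · rw [← hd]; exact norm_nonneg _
  · nlinarith

end Prox

section Smooth

variable {n m : ℕ} {ψ : Eu m → ℝ} {gradψ : Eu m → Eu m} {hessψ : Eu m → (Eu m →L[ℝ] Eu m)}
  {A : Eu n →L[ℝ] Eu m} {b : Eu m} {O : Set (Eu n)}

theorem TwiceDiffOn.hasFDerivAt_gradfval (hT : TwiceDiffOn ψ gradψ hessψ A b O) {x : Eu n}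
    (hx : x ∈ O) : HasFDerivAt (gradfval gradψ A b) (hessfval hessψ A b x) x :=
  (ContinuousLinearMap.adjoint A).hasFDerivAt.comp x
    ((hT.2.1 _ ⟨x, hx, rfl⟩).comp x (A.hasFDerivAt.sub_const b))

theorem TwiceDiffOn.continuousOn_hessfval (hT : TwiceDiffOn ψ gradψ hessψ A b O) :
    ContinuousOn (hessfval hessψ A b) O := by
  have hcomp : ContinuousOn (fun x => hessψ (A x - b)) O :=
    hT.2.2.2.comp (by fun_prop) fun x hx => ⟨x, hx, rfl⟩
  exact continuousOn_const.clm_comp (hcomp.clm_comp continuousOn_const)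

theorem TwiceDiffOn.exists_lipschitzOnWith_gradfval (hT : TwiceDiffOn ψ gradψ hessψ A b O)
    {x : Eu n} (hO : O ∈ 𝓝 x) :
    ∃ K, ∃ t ∈ 𝓝 x, LipschitzOnWith K (gradfval gradψ A b) t :=
  ContDiffAt.exists_lipschitzOnWith (contDiffAt_one_iff.2
    ⟨hessfval hessψ A b, O, hO, hT.continuousOn_hessfval, fun _ hy => hT.hasFDerivAt_gradfval hy⟩)

end Smooth

section Residual

variable {n m : ℕ} {gradψ : Eu m → Eu m} {A : Eu n →L[ℝ] Eu m} {b : Eu m}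
  {g : Eu n → EReal} {prox : Eu n → Eu n}

theorem IsProxOf.prox_sub_gradfval_eq_self (hprox : IsProxOf g prox) (hp : ProperFun g)
    (hc : ConvexFun g) {x : Eu n} (hx : x ∈ SstarSet gradψ A b g) :
    prox (x - gradfval gradψ A b x) = x :=
  hprox.eq_of_sub_mem_subdiff hp hc (by rw [sub_sub_cancel_left, ← zero_sub]; exact hx)

theorem IsProxOf.sub_add_gradfval_mem_subF (hprox : IsProxOf g prox) (hp : ProperFun g)
    (hc : ConvexFun g) (w : Eu n) :
    w - prox w + gradfval gradψ A b (prox w) ∈ subF gradψ A b g (prox w) := by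
  change w - prox w + gradfval gradψ A b (prox w) - gradfval gradψ A b (prox w) ∈ subdiff g _
  rw [add_sub_cancel_right]
  exact hprox.sub_mem_subdiff hp hc w

theorem infDist_SstarSet_le_rres (hprox : IsProxOf g prox) (hp : ProperFun g)
    (hc : ConvexFun g) {K : NNReal} {t : Set (Eu n)}
    (hK : LipschitzOnWith K (gradfval gradψ A b) t)
    {κ q : ℝ} (hκ : 0 ≤ κ) (hq : 0 < q) {z : Eu n} (hz : z ∈ t)
    (hpt : prox (z - gradfval gradψ A b z) ∈ t)
    (hsub : ∀ v ∈ subF gradψ A b g (prox (z - gradfval gradψ A b z)),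
      infDist (prox (z - gradfval gradψ A b z)) (SstarSet gradψ A b g) ≤ κ * ‖v‖ ^ q)
    (hr : rres gradψ A b prox z ≤ 1) :
    infDist z (SstarSet gradψ A b g)
      ≤ (κ * (1 + K) ^ q + 1) * rres gradψ A b prox z ^ min q 1 := by
  set p := prox (z - gradfval gradψ A b z)
  set r := rres gradψ A b prox z
  have hr₀ : 0 ≤ r := norm_nonneg _
  set v := z - gradfval gradψ A b z - p + gradfval gradψ A b p with hv_def
  have hv : v ∈ subF gradψ A b g p := hprox.sub_add_gradfval_mem_subF hp hc _
  have hvr : ‖v‖ ≤ (1 + K) * r :=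
    calc ‖v‖ = ‖(z - p) + (gradfval gradψ A b p - gradfval gradψ A b z)‖ := by
          rw [hv_def]; abel_nf
      _ ≤ r + K * r := by
          refine (norm_add_le _ _).trans (add_le_add le_rfl ?_)
          have h := hK.norm_sub_le hpt hz
          rw [norm_sub_rev p z] at h
          exact h
      _ = (1 + K) * r := by ring
  have hmin : 0 ≤ min q 1 := le_min hq.le zero_le_one
  have hrq : r ^ q ≤ r ^ min q 1 :=
    Real.rpow_le_rpow_of_exponent_ge' hr₀ hr hmin (min_le_left q 1)
  have hr₁ : r ≤ r ^ min q 1 := by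
    simpa using Real.rpow_le_rpow_of_exponent_ge' hr₀ hr hmin (min_le_right q 1)
  calc infDist z (SstarSet gradψ A b g)
      ≤ infDist p (SstarSet gradψ A b g) + dist z p := infDist_le_infDist_add_dist
    _ ≤ κ * ((1 + K) * r) ^ q + r := by
        gcongr
        · exact (hsub v hv).trans (by gcongr)
        · exact (dist_eq_norm z p).le
    _ ≤ κ * ((1 + K) ^ q * r ^ min q 1) + r ^ min q 1 := by
        rw [Real.mul_rpow (by positivity) hr₀]
        gcongr
    _ = (κ * (1 + K) ^ q + 1) * r ^ min q 1 := by ring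

end Residual

noncomputable section

/-- Lemma 2.1, first part. If `∂F` is `q`-subregular at `x̄ ∈ S*` for `0`,
then the residual mapping `R` is `min{q,1}`-subregular at `x̄` for `0`. -/
theorem statement1 {n m : ℕ} (ψ : Eu m → ℝ) (gradψ : Eu m → Eu m)
    (hessψ : Eu m → (Eu m →L[ℝ] Eu m)) (A : Eu n →L[ℝ] Eu m) (b : Eu m)
    (g : Eu n → EReal) (prox : Eu n → Eu n) (O : Set (Eu n))
    (hbasic : BasicAssumptions ψ gradψ hessψ A b g prox O)
    (xbar : Eu n) (hxbar : xbar ∈ SstarSet gradψ A b g)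
    (q : ℝ) (hq : 0 < q)
    (hball : ∃ δ > (0 : ℝ), Metric.closedBall xbar δ ⊆ O)
    (hsub : ∃ κ > (0 : ℝ), ∃ δ > (0 : ℝ), ∀ z ∈ Metric.closedBall xbar δ,
        ∀ v ∈ subF gradψ A b g z,
          Metric.infDist z (SstarSet gradψ A b g) ≤ κ * ‖v‖ ^ q) :
    ∃ ν > (0 : ℝ), ∃ δ > (0 : ℝ), ∀ z ∈ Metric.closedBall xbar δ,
      Metric.infDist z (SstarSet gradψ A b g)
        ≤ ν * (rres gradψ A b prox z) ^ (min q 1) := by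
  obtain ⟨-, -, hT, hp, hc, -, -, hprox, -, -⟩ := hbasic
  obtain ⟨ρ, hρ, hρO⟩ := hball
  obtain ⟨κ, hκ, δ, hδ, hsub⟩ := hsub
  have hO : O ∈ 𝓝 xbar := mem_of_superset (closedBall_mem_nhds xbar hρ) hρO
  obtain ⟨K, t, ht, hK⟩ := hT.exists_lipschitzOnWith_gradfval hO
  have hstep : Tendsto (fun z => prox (z - gradfval gradψ A b z)) (𝓝 xbar) (𝓝 xbar) := by
    have hcont : ContinuousAt (fun z => prox (z - gradfval gradψ A b z)) xbar :=
      (hprox.lipschitzWith_one hp hc).continuous.continuousAt.comp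
        (continuousAt_id.sub (hT.hasFDerivAt_gradfval (mem_of_mem_nhds hO)).continuousAt)
    simpa [ContinuousAt, hprox.prox_sub_gradfval_eq_self hp hc hxbar] using hcont
  have hres : Tendsto (rres gradψ A b prox) (𝓝 xbar) (𝓝 0) := by
    have h := (tendsto_id.sub hstep).norm
    rw [sub_self, norm_zero] at h
    exact h
  refine ⟨κ * (1 + K) ^ q + 1, by positivity, Metric.nhds_basis_closedBall.eventually_iff.1 ?_⟩
  filter_upwards [ht, hstep.eventually ht, hstep.eventually (closedBall_mem_nhds xbar hδ),
    hres.eventually (Iic_mem_nhds one_pos)] with z hz hpt hpδ hr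
  exact infDist_SstarSet_le_rres hprox hp hc hK hκ.le hq hz hpt (hsub _ hpδ) hr

end
end

section
/- Let x̄ ∈ S* and q > 0, and suppose Assumption A0 holds at x̄. If ∂F is q-subregular at x̄ for 0, then F has the KL property of exponent max{1/(2q), 1/(1+q)} at x̄; explicitly, there exist δ > 0 and c > 0 such that dist(0, ∂F(z)) ≥ c·(F(z) − F(x̄))^{max{1/(2q), 1/(1+q)}} for all z ∈ B(x̄, δ) with F(x̄) < F(z) < F(x̄) + δ. -/
open Set Metric Filter Bornology
open scoped RealInnerProductSpace Topology ENNReal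

/-!
Near `x̄` the function `ψ` is `C²` along `A · - b`, so `∇f` is Lipschitz on a small ball. The
subgradient inequality for `g` at `z` plus the descent lemma for `f` give, for `v ∈ ∂F(z)`,
`F(z) - F(y) ≤ ‖v‖ ‖z - y‖ + K ‖z - y‖²`. Subregularity supplies `y ∈ S*` with
`‖z - y‖ ≤ 2κ ‖v‖^q`, and Assumption A0 gives `F(y) ≤ F(x̄)`; hence
`F(z) - F(x̄) ≤ C ‖v‖^{min(2q, 1+q)}` whenever `‖v‖` is small. When `‖v‖` is not small the
claim is immediate, because `F(z) - F(x̄) < 1`.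
-/

open scoped NNReal

theorem Convex.abs_sub_sub_inner_le_of_lipschitzOnWith {E : Type*} [NormedAddCommGroup E]
    [InnerProductSpace ℝ E] [CompleteSpace E] {f : E → ℝ} {f' : E → E} {s : Set E} {K : ℝ≥0}
    (hs : Convex ℝ s) (hf : ∀ x ∈ s, HasGradientAt f (f' x) x) (hK : LipschitzOnWith K f' s)
    {x y : E} (hx : x ∈ s) (hy : y ∈ s) :
    |f y - f x - ⟪f' x, y - x⟫| ≤ K * ‖y - x‖ ^ 2 := by
  have hseg : segment ℝ x y ⊆ s := hs.segment_subset hx hy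
  have hbound : ∀ w ∈ segment ℝ x y,
      ‖InnerProductSpace.toDual ℝ E (f' w) - InnerProductSpace.toDual ℝ E (f' x)‖
        ≤ K * ‖y - x‖ := by
    intro w hw
    rw [← map_sub, LinearIsometryEquiv.norm_map]
    calc ‖f' w - f' x‖ ≤ K * ‖w - x‖ := hK.norm_sub_le (hseg hw) hx
      _ ≤ K * ‖y - x‖ := by gcongr; exact norm_sub_le_of_mem_segment hw
  have hmvt := (convex_segment x y).norm_image_sub_le_of_norm_hasFDerivWithin_le'
    (fun w hw => (hf w (hseg hw)).hasFDerivAt.hasFDerivWithinAt) hbound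
    (left_mem_segment ℝ x y) (right_mem_segment ℝ x y)
  rw [Real.norm_eq_abs, InnerProductSpace.toDual_apply_apply] at hmvt
  linarith

lemma EReal.toReal_sub_mem_Ioo {a b : EReal} {δ : ℝ} (h₁ : b < a) (h₂ : a < b + δ) :
    (a - b).toReal ∈ Ioo 0 δ := by
  induction a using EReal.rec <;> induction b using EReal.rec <;>
    simp_all [← EReal.coe_add, ← EReal.coe_sub]
  linarith

lemma EReal.toReal_sub_le_of_le_add {a b : EReal} {r : ℝ} (h₁ : b < a) (h₂ : a ≤ b + r) :
    (a - b).toReal ≤ r := by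
  induction a using EReal.rec <;> induction b using EReal.rec <;>
    simp_all [← EReal.coe_add, ← EReal.coe_sub]
  linarith

lemma max_one_div_eq_inv_min {a b : ℝ} (ha : 0 < a) (hb : 0 < b) :
    max (1 / a) (1 / b) = (min a b)⁻¹ := by
  rcases le_total a b with h | h
  · rw [min_eq_left h, max_eq_left (one_div_le_one_div_of_le ha h), one_div]
  · rw [min_eq_right h, max_eq_right (one_div_le_one_div_of_le hb h), one_div]

lemma mul_add_mul_sq_le_mul_rpow_min {s d κ C q : ℝ} (hs : 0 ≤ s) (hs1 : s ≤ 1) (hq : 0 < q)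
    (hκ : 0 ≤ κ) (hC : 0 ≤ C) (hd : 0 ≤ d) (hdκ : d ≤ κ * s ^ q) :
    s * d + C * d ^ 2 ≤ (κ + C * κ ^ 2) * s ^ min (2 * q) (1 + q) := by
  have hp : 0 ≤ min (2 * q) (1 + q) := le_min (by positivity) (by positivity)
  have h₁ : s ^ (1 + q) ≤ s ^ min (2 * q) (1 + q) :=
    Real.rpow_le_rpow_of_exponent_ge' hs hs1 hp (min_le_right _ _)
  have h₂ : s ^ (2 * q) ≤ s ^ min (2 * q) (1 + q) :=
    Real.rpow_le_rpow_of_exponent_ge' hs hs1 hp (min_le_left _ _)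
  calc s * d + C * d ^ 2 ≤ s * (κ * s ^ q) + C * (κ * s ^ q) ^ 2 := by gcongr
    _ = κ * s ^ (1 + q) + C * κ ^ 2 * s ^ (2 * q) := by
      rw [Real.rpow_add' hs (by positivity), Real.rpow_one, mul_comm 2 q,
        Real.rpow_mul hs, Real.rpow_two]
      ring
    _ ≤ κ * s ^ min (2 * q) (1 + q) + C * κ ^ 2 * s ^ min (2 * q) (1 + q) := by
      gcongr
    _ = (κ + C * κ ^ 2) * s ^ min (2 * q) (1 + q) := by ring

lemma rpow_inv_le_of_le_mul_rpow {t s C p : ℝ} (ht : 0 ≤ t) (hs : 0 ≤ s) (hC : 0 ≤ C)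
    (hp : 0 < p) (h : t ≤ C * s ^ p) : t ^ p⁻¹ ≤ C ^ p⁻¹ * s :=
  calc t ^ p⁻¹ ≤ (C * s ^ p) ^ p⁻¹ := Real.rpow_le_rpow ht h (inv_nonneg.2 hp.le)
    _ = C ^ p⁻¹ * s := by
      rw [Real.mul_rpow hC (Real.rpow_nonneg hs _), Real.rpow_rpow_inv hs hp.ne']

lemma subdiff_ne_top {n : ℕ} {g : Eu n → EReal} (hg : ∃ y, g y ≠ ⊤) {x v : Eu n}
    (hv : v ∈ subdiff g x) : g x ≠ ⊤ := by
  intro hx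
  obtain ⟨y, hy⟩ := hg
  have := hv y
  rw [hx, EReal.top_add_of_ne_bot (EReal.coe_ne_bot _), top_le_iff] at this
  exact hy this

lemma fval_hasGradientAt {n m : ℕ} {ψ : Eu m → ℝ} {gradψ : Eu m → Eu m}
    {A : Eu n →L[ℝ] Eu m} {b : Eu m} {x : Eu n}
    (h : HasGradientAt ψ (gradψ (A x - b)) (A x - b)) :
    HasGradientAt (fval ψ A b) (gradfval gradψ A b x) x := by
  have hcomp := h.hasFDerivAt.comp x (A.hasFDerivAt.sub_const b)
  have hderiv : (InnerProductSpace.toDual ℝ (Eu m) (gradψ (A x - b))).comp A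
      = InnerProductSpace.toDual ℝ (Eu n) (gradfval gradψ A b x) := by
    ext w
    simp [gradfval, InnerProductSpace.toDual_apply_apply, ContinuousLinearMap.adjoint_inner_left]
  rw [hderiv] at hcomp
  exact hasGradientAt_iff_hasFDerivAt.2 hcomp

lemma gradfval_hasFDerivAt {n m : ℕ} {gradψ : Eu m → Eu m}
    {hessψ : Eu m → (Eu m →L[ℝ] Eu m)} {A : Eu n →L[ℝ] Eu m} {b : Eu m} {x : Eu n}
    (h : HasFDerivAt gradψ (hessψ (A x - b)) (A x - b)) :
    HasFDerivAt (gradfval gradψ A b) (hessfval hessψ A b x) x :=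
  (ContinuousLinearMap.adjoint A).hasFDerivAt.comp x (h.comp x (A.hasFDerivAt.sub_const b))

lemma TwiceDiffOn.contDiffAt_gradfval {n m : ℕ} {ψ : Eu m → ℝ} {gradψ : Eu m → Eu m}
    {hessψ : Eu m → (Eu m →L[ℝ] Eu m)} {A : Eu n →L[ℝ] Eu m} {b : Eu m} {O : Set (Eu n)}
    (hψ : TwiceDiffOn ψ gradψ hessψ A b O) (hO : IsOpen O) {x : Eu n} (hx : x ∈ O) :
    ContDiffAt ℝ 1 (gradfval gradψ A b) x := by
  have haff : Continuous fun z : Eu n => A z - b := A.continuous.sub continuous_const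
  have hhess : ContinuousOn (fun z => hessψ (A z - b)) O :=
    hψ.2.2.2.comp haff.continuousOn (mapsTo_image _ O)
  refine contDiffAt_one_iff.2 ⟨hessfval hessψ A b, O, hO.mem_nhds hx, ?_,
    fun z hz => gradfval_hasFDerivAt (hψ.2.1 _ ⟨z, hz, rfl⟩)⟩
  exact continuousOn_const.clm_comp (hhess.clm_comp continuousOn_const)

lemma Fval_le_Fval_add_of_mem_subF {n m : ℕ} {ψ : Eu m → ℝ} {gradψ : Eu m → Eu m}
    {A : Eu n →L[ℝ] Eu m} {b : Eu m} {g : Eu n → EReal} {s : Set (Eu n)} {K : ℝ≥0}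
    (hs : Convex ℝ s) (hf : ∀ x ∈ s, HasGradientAt (fval ψ A b) (gradfval gradψ A b x) x)
    (hK : LipschitzOnWith K (gradfval gradψ A b) s) {y z v : Eu n} (hy : y ∈ s) (hz : z ∈ s)
    (hv : v ∈ subF gradψ A b g z) :
    Fval ψ A b g z ≤ Fval ψ A b g y + ((‖v‖ * ‖z - y‖ + K * ‖z - y‖ ^ 2 : ℝ) : EReal) := by
  set R := ‖v‖ * ‖z - y‖ + K * ‖z - y‖ ^ 2
  set r := ⟪v - gradfval gradψ A b z, y - z⟫
  have hreal : fval ψ A b z ≤ fval ψ A b y + R + r := by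
    have hdesc := (abs_le.1 (hs.abs_sub_sub_inner_le_of_lipschitzOnWith hf hK hz hy)).1
    have hcs : ⟪v, z - y⟫ ≤ ‖v‖ * ‖z - y‖ := real_inner_le_norm v (z - y)
    have hyz : y - z = -(z - y) := (neg_sub z y).symm
    rw [norm_sub_rev] at hdesc
    simp only [r, R, inner_sub_left, hyz, inner_neg_right] at hdesc ⊢
    linarith
  calc Fval ψ A b g z = (fval ψ A b z : EReal) + g z := rfl
    _ ≤ ((fval ψ A b y + R + r : ℝ) : EReal) + g z :=
        add_le_add_left (EReal.coe_le_coe_iff.2 hreal) _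
    _ = ((fval ψ A b y + R : ℝ) : EReal) + (g z + r) := by rw [EReal.coe_add]; abel
    _ ≤ ((fval ψ A b y + R : ℝ) : EReal) + g y := add_le_add_right (hv y) _
    _ = Fval ψ A b g y + R := by rw [EReal.coe_add, Fval]; abel

lemma exists_closedBall_Fval_le_Fval_add {n m : ℕ} {ψ : Eu m → ℝ} {gradψ : Eu m → Eu m}
    {hessψ : Eu m → (Eu m →L[ℝ] Eu m)} {A : Eu n →L[ℝ] Eu m} {b : Eu m} {g : Eu n → EReal}
    {O : Set (Eu n)} (hO : IsOpen O) (hψ : TwiceDiffOn ψ gradψ hessψ A b O) {xbar : Eu n}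
    (hxbar : xbar ∈ O) {ε : ℝ} (hε : 0 < ε)
    (hA0 : ∀ z ∈ SstarSet gradψ A b g ∩ closedBall xbar ε,
      Fval ψ A b g z ≤ Fval ψ A b g xbar) :
    ∃ ρ > (0 : ℝ), ∃ K : ℝ≥0, ∀ z ∈ closedBall xbar ρ, ∀ v ∈ subF gradψ A b g z,
      ∀ y ∈ SstarSet gradψ A b g ∩ closedBall xbar ρ,
        Fval ψ A b g z ≤ Fval ψ A b g xbar + ((‖v‖ * ‖z - y‖ + K * ‖z - y‖ ^ 2 : ℝ) : EReal) := by
  obtain ⟨K, t, ht, hK⟩ := (hψ.contDiffAt_gradfval hO hxbar).exists_lipschitzOnWith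
  obtain ⟨ρ, hρ, hball⟩ := nhds_basis_closedBall.mem_iff.1
    (inter_mem ht (inter_mem (hO.mem_nhds hxbar) (closedBall_mem_nhds xbar hε)))
  refine ⟨ρ, hρ, K, fun z hz v hv y ⟨hyS, hyρ⟩ => ?_⟩
  calc Fval ψ A b g z ≤ Fval ψ A b g y + ((‖v‖ * ‖z - y‖ + K * ‖z - y‖ ^ 2 : ℝ) : EReal) :=
        Fval_le_Fval_add_of_mem_subF (convex_closedBall xbar ρ)
          (fun x hx => fval_hasGradientAt (hψ.1 _ ⟨x, (hball hx).2.1, rfl⟩))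
          (hK.mono fun x hx => (hball hx).1) hyρ hz hv
    _ ≤ Fval ψ A b g xbar + ((‖v‖ * ‖z - y‖ + K * ‖z - y‖ ^ 2 : ℝ) : EReal) := by
        gcongr
        exact hA0 y ⟨hyS, (hball hyρ).2.2⟩

/-- `S*` need not be closed, so the distance to it is only attained up to a factor `2`. -/
lemma exists_mem_SstarSet_dist_le {n m : ℕ} {gradψ : Eu m → Eu m} {A : Eu n →L[ℝ] Eu m}
    {b : Eu m} {g : Eu n → EReal} {κ q : ℝ} (hκ : 0 < κ)
    (hS : (SstarSet gradψ A b g).Nonempty) {z v : Eu n} (hv : v ∈ subF gradψ A b g z)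
    (hdist : infDist z (SstarSet gradψ A b g) ≤ κ * ‖v‖ ^ q) :
    ∃ y ∈ SstarSet gradψ A b g, dist z y ≤ 2 * κ * ‖v‖ ^ q := by
  rcases eq_or_ne v 0 with rfl | hv0
  · exact ⟨z, hv, by rw [dist_self]; positivity⟩
  · have hpos : 0 < κ * ‖v‖ ^ q := mul_pos hκ (Real.rpow_pos_of_pos (norm_pos_iff.2 hv0) q)
    obtain ⟨y, hy, hzy⟩ := (infDist_lt_iff hS).1 (by linarith : infDist z _ < 2 * κ * ‖v‖ ^ q)
    exact ⟨y, hy, hzy.le⟩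

lemma exists_Fval_le_Fval_add_rpow {n m : ℕ} {ψ : Eu m → ℝ} {gradψ : Eu m → Eu m}
    {hessψ : Eu m → (Eu m →L[ℝ] Eu m)} {A : Eu n →L[ℝ] Eu m} {b : Eu m} {g : Eu n → EReal}
    {O : Set (Eu n)} (hO : IsOpen O) (hψ : TwiceDiffOn ψ gradψ hessψ A b O) {xbar : Eu n}
    (hxbarO : xbar ∈ O) (hxbar : xbar ∈ SstarSet gradψ A b g) {ε : ℝ} (hε : 0 < ε)
    (hA0 : ∀ z ∈ SstarSet gradψ A b g ∩ closedBall xbar ε,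
      Fval ψ A b g z ≤ Fval ψ A b g xbar)
    {q κ δ : ℝ} (hq : 0 < q) (hκ : 0 < κ) (hδ : 0 < δ)
    (hsub : ∀ z ∈ closedBall xbar δ, ∀ v ∈ subF gradψ A b g z,
      infDist z (SstarSet gradψ A b g) ≤ κ * ‖v‖ ^ q) :
    ∃ δ' > (0 : ℝ), ∃ s₀ > (0 : ℝ), ∃ C > (0 : ℝ), ∀ z ∈ closedBall xbar δ',
      ∀ v ∈ subF gradψ A b g z, ‖v‖ ≤ s₀ →
        Fval ψ A b g z ≤ Fval ψ A b g xbar + ((C * ‖v‖ ^ min (2 * q) (1 + q) : ℝ) : EReal) := by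
  obtain ⟨ρ, hρ, K, hFle⟩ := exists_closedBall_Fval_le_Fval_add hO hψ hxbarO hε hA0
  refine ⟨min (ρ / 2) δ, by positivity, min 1 ((ρ / (4 * κ)) ^ q⁻¹), by positivity,
    2 * κ + K * (2 * κ) ^ 2, by positivity, fun z hz v hv hvs => ?_⟩
  have hzρ : dist z xbar ≤ ρ / 2 := (mem_closedBall.1 hz).trans (min_le_left _ _)
  have hvρ : 2 * κ * ‖v‖ ^ q ≤ ρ / 2 := by
    have := (Real.le_rpow_inv_iff_of_pos (norm_nonneg v) (by positivity) hq).1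
      (hvs.trans (min_le_right _ _))
    rw [le_div_iff₀ (by positivity)] at this
    linarith
  obtain ⟨y, hyS, hzy⟩ := exists_mem_SstarSet_dist_le hκ ⟨xbar, hxbar⟩ hv
    (hsub z (closedBall_subset_closedBall (min_le_right _ _) hz) v hv)
  have hyρ : y ∈ closedBall xbar ρ := by
    rw [mem_closedBall]
    linarith [dist_triangle_left y xbar z]
  calc Fval ψ A b g z
      ≤ Fval ψ A b g xbar + ((‖v‖ * ‖z - y‖ + K * ‖z - y‖ ^ 2 : ℝ) : EReal) :=
        hFle z (closedBall_subset_closedBall (by linarith) (mem_closedBall.2 hzρ)) v hv y ⟨hyS, hyρ⟩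
    _ ≤ Fval ψ A b g xbar
          + (((2 * κ + K * (2 * κ) ^ 2) * ‖v‖ ^ min (2 * q) (1 + q) : ℝ) : EReal) := by
        gcongr
        rw [← dist_eq_norm]
        exact mul_add_mul_sq_le_mul_rpow_min (norm_nonneg v) (hvs.trans (min_le_left _ _)) hq
          (by positivity) K.2 dist_nonneg hzy

/-- Proposition 2.2 (i). Under Assumption A0 at `x̄ ∈ S*`, the
`q`-subregularity of `∂F` at `x̄` for `0` implies that `F` has the KL property of exponent
`max{1/(2q), 1/(1+q)}` at `x̄`. -/
theorem statement3 {n m : ℕ} (ψ : Eu m → ℝ) (gradψ : Eu m → Eu m)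
    (hessψ : Eu m → (Eu m →L[ℝ] Eu m)) (A : Eu n →L[ℝ] Eu m) (b : Eu m)
    (g : Eu n → EReal) (prox : Eu n → Eu n) (O : Set (Eu n))
    (hbasic : BasicAssumptions ψ gradψ hessψ A b g prox O)
    (xbar : Eu n) (hxbar : xbar ∈ SstarSet gradψ A b g)
    (q : ℝ) (hq : 0 < q)
    (hA0 : ∃ ε > (0 : ℝ), ∀ z ∈ SstarSet gradψ A b g ∩ Metric.closedBall xbar ε,
        Fval ψ A b g z ≤ Fval ψ A b g xbar)
    (hsub : ∃ κ > (0 : ℝ), ∃ δ > (0 : ℝ), ∀ z ∈ Metric.closedBall xbar δ,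
        ∀ v ∈ subF gradψ A b g z,
          Metric.infDist z (SstarSet gradψ A b g) ≤ κ * ‖v‖ ^ q) :
    ∃ δ > (0 : ℝ), ∃ c > (0 : ℝ), ∀ z ∈ Metric.closedBall xbar δ,
      Fval ψ A b g xbar < Fval ψ A b g z →
      Fval ψ A b g z < Fval ψ A b g xbar + ((δ : ℝ) : EReal) →
        ∀ v ∈ subF gradψ A b g z,
          c * ((Fval ψ A b g z - Fval ψ A b g xbar).toReal)
              ^ (max (1/(2*q)) (1/(1+q))) ≤ ‖v‖ := by
  obtain ⟨hO, hdom, hψ, hg, -⟩ := hbasic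
  obtain ⟨ε, hε, hA0⟩ := hA0
  obtain ⟨κ, hκ, δ, hδ, hsub⟩ := hsub
  obtain ⟨δ', hδ', s₀, hs₀, C, hC, hFle⟩ := exists_Fval_le_Fval_add_rpow hO hψ
    (hdom (subdiff_ne_top hg.1 hxbar)) hxbar hε hA0 hq hκ hδ hsub
  set p := min (2 * q) (1 + q)
  have hp : 0 < p := by positivity
  refine ⟨min δ' 1, by positivity, min s₀ (C ^ p⁻¹)⁻¹, by positivity,
    fun z hz hlt hub v hv => ?_⟩
  obtain ⟨ht₀, ht₁⟩ := EReal.toReal_sub_mem_Ioo hlt hub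
  set t := (Fval ψ A b g z - Fval ψ A b g xbar).toReal
  rw [max_one_div_eq_inv_min (by positivity) (by positivity)]
  rcases le_or_gt ‖v‖ s₀ with hsmall | hlarge
  · have ht := EReal.toReal_sub_le_of_le_add hlt
      (hFle z (closedBall_subset_closedBall (min_le_left _ _) hz) v hv hsmall)
    calc min s₀ (C ^ p⁻¹)⁻¹ * t ^ p⁻¹ ≤ (C ^ p⁻¹)⁻¹ * (C ^ p⁻¹ * ‖v‖) := by
          gcongr
          · exact min_le_right _ _
          · exact rpow_inv_le_of_le_mul_rpow ht₀.le (norm_nonneg v) hC.le hp ht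
      _ = ‖v‖ := inv_mul_cancel_left₀ (by positivity) _
  · calc min s₀ (C ^ p⁻¹)⁻¹ * t ^ p⁻¹ ≤ s₀ * 1 := by
          gcongr
          · exact min_le_left _ _
          · exact Real.rpow_le_one ht₀.le (ht₁.le.trans (min_le_right _ _)) (by positivity)
      _ ≤ ‖v‖ := by rw [mul_one]; exact hlarge.le
end

section
/- Let x, y ∈ dom g with d := y − x ≠ 0, and let μ > 0, σ ∈ (0, 1/2), β ∈ (0,1). If ⟨∇f(x), y − x⟩ + g(y) − g(x) ≤ −(μ/2)‖y − x‖², then the directional derivative satisfies F′(x; d) ≤ −(μ/2)‖d‖² < 0, and consequently there exists a nonnegative integer m such that the Armijo condition F(x) − F(x + βᵐ d) ≥ σ βᵐ μ ‖d‖² holds. -/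
open Set Metric Filter Bornology
open scoped RealInnerProductSpace Topology ENNReal

noncomputable section

/-! Along the segment `t ↦ x + t • d`, `t ∈ [0, 1]`, convexity keeps `g` finite, so
`F(x + t d) = r(t) := f(x + t d) + q(t)` with `q` a real convex function on `[0, 1]`. The
difference quotients of `q` at `0` are monotone and bounded by `q 1 - q 0`; hence the quotients
of `r` converge in `EReal` (possibly to `⊥`) to a limit at most `⟪∇f(x), d⟫ + g(y) - g(x)`,
which the hypothesis bounds by `-(μ/2)‖d‖²`. Since `σ μ ‖d‖² < (μ/2)‖d‖²`, the quotient
eventually lies below `-σ μ ‖d‖²`, and `βᵐ → 0⁺` gives the Armijo step. -/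

theorem ConvexFun.ne_top_add_smul {n : ℕ} {g : Eu n → EReal} (hconv : ConvexFun g)
    (hbot : ∀ z, g z ≠ ⊥) {x d : Eu n} (hx : g x ≠ ⊤) (hxd : g (x + d) ≠ ⊤) {t : ℝ}
    (ht : t ∈ Icc (0 : ℝ) 1) : g (x + t • d) ≠ ⊤ := by
  have hcomb : x + t • d = (1 - t) • x + t • (x + d) := by module
  have hle := hconv x (x + d) (1 - t) t (by linarith [ht.2]) ht.1 (by ring)
  rw [← hcomb, ← EReal.coe_toReal hx (hbot x), ← EReal.coe_toReal hxd (hbot _),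
    ← EReal.coe_mul, ← EReal.coe_mul, ← EReal.coe_add] at hle
  exact ne_top_of_le_ne_top (EReal.coe_ne_top _) hle

theorem ConvexFun.convexOn_toReal_line {n : ℕ} {g : Eu n → EReal} (hconv : ConvexFun g)
    (hbot : ∀ z, g z ≠ ⊥) {x d : Eu n} (hx : g x ≠ ⊤) (hxd : g (x + d) ≠ ⊤) :
    ConvexOn ℝ (Icc 0 1) fun t : ℝ => (g (x + t • d)).toReal := by
  have hfin : ∀ t ∈ Icc (0 : ℝ) 1, g (x + t • d) = ((g (x + t • d)).toReal : EReal) :=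
    fun t ht => (EReal.coe_toReal (hconv.ne_top_add_smul hbot hx hxd ht) (hbot _)).symm
  refine ⟨convex_Icc 0 1, fun s hs t ht a c ha hc hac => ?_⟩
  have hcomb : x + (a • s + c • t) • d = a • (x + s • d) + c • (x + t • d) := by
    calc x + (a • s + c • t) • d = (a + c) • x + (a • s + c • t) • d := by
          rw [hac, one_smul]
      _ = a • (x + s • d) + c • (x + t • d) := by module
  have hle := hconv (x + s • d) (x + t • d) a c ha hc hac
  rw [← hcomb, hfin _ ((convex_Icc 0 1) hs ht ha hc hac), hfin s hs, hfin t ht,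
    ← EReal.coe_mul, ← EReal.coe_mul, ← EReal.coe_add, EReal.coe_le_coe_iff] at hle
  simpa only [smul_eq_mul] using hle

theorem hasDerivAt_fval_line {n m : ℕ} {ψ : Eu m → ℝ} {gradψ : Eu m → Eu m}
    {A : Eu n →L[ℝ] Eu m} {b : Eu m} {x : Eu n} (d : Eu n)
    (hψ : HasGradientAt ψ (gradψ (A x - b)) (A x - b)) :
    HasDerivAt (fun t : ℝ => fval ψ A b (x + t • d)) ⟪gradfval gradψ A b x, d⟫ 0 := by
  have hline : HasDerivAt (fun t : ℝ => (A x - b) + t • A d) (A d) 0 := by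
    simpa using ((hasDerivAt_id (0 : ℝ)).smul_const (A d)).const_add (A x - b)
  have hψ' : HasFDerivAt ψ (InnerProductSpace.toDual ℝ (Eu m) (gradψ (A x - b)))
      ((A x - b) + (0 : ℝ) • A d) := by
    simpa using hψ.hasFDerivAt
  have hcomp :
      (fun t : ℝ => fval ψ A b (x + t • d)) = ψ ∘ fun t => (A x - b) + t • A d := by
    ext t
    simp only [fval, Function.comp_apply, map_add, map_smul, add_sub_right_comm]
  rw [hcomp, gradfval, ContinuousLinearMap.adjoint_inner_left]
  exact hψ'.comp_hasDerivAt 0 hline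

theorem ConvexOn.exists_tendsto_slope_zero_le {q : ℝ → ℝ} (hq : ConvexOn ℝ (Icc 0 1) q) :
    ∃ L : EReal, Tendsto (fun t => (((q t - q 0) / t : ℝ) : EReal)) (𝓝[>] 0) (𝓝 L) ∧
      L ≤ ((q 1 - q 0 : ℝ) : EReal) := by
  have hslope : ∀ s ∈ Ioc (0 : ℝ) 1, ∀ t ∈ Ioc (0 : ℝ) 1, s ≤ t →
      (q s - q 0) / s ≤ (q t - q 0) / t := fun s hs t ht hst => by
    simpa only [sub_zero] using hq.secant_mono ⟨le_rfl, zero_le_one⟩ (Ioc_subset_Icc_self hs)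
      (Ioc_subset_Icc_self ht) hs.1.ne' ht.1.ne' hst
  have hmono : MonotoneOn (fun t => (((q t - q 0) / t : ℝ) : EReal)) (Ioo 0 1) :=
    fun s hs t ht hst => EReal.coe_le_coe_iff.2 <|
      hslope s (Ioo_subset_Ioc_self hs) t (Ioo_subset_Ioc_self ht) hst
  refine ⟨_, hmono.tendsto_nhdsWithin_Ioo_right ⟨1 / 2, by norm_num⟩ (OrderBot.bddBelow _), ?_⟩
  calc sInf ((fun t => (((q t - q 0) / t : ℝ) : EReal)) '' Ioo 0 1)
      ≤ (((q (1 / 2) - q 0) / (1 / 2) : ℝ) : EReal) := sInf_le ⟨1 / 2, by norm_num, rfl⟩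
    _ ≤ ((q 1 - q 0 : ℝ) : EReal) := EReal.coe_le_coe_iff.2 <| by
      simpa using hslope (1 / 2) (by norm_num) 1 (by norm_num) (by norm_num)

theorem HasDerivAt.exists_tendsto_slope_add_le {φ q : ℝ → ℝ} {a : ℝ}
    (hφ : HasDerivAt φ a 0) (hq : ConvexOn ℝ (Icc 0 1) q) :
    ∃ L : EReal, Tendsto (fun t => ((((φ t + q t) - (φ 0 + q 0)) / t : ℝ) : EReal))
        (𝓝[>] 0) (𝓝 L) ∧ L ≤ ((a + (q 1 - q 0) : ℝ) : EReal) := by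
  obtain ⟨L, hqL, hLle⟩ := hq.exists_tendsto_slope_zero_le
  have hφa :
      Tendsto (fun t => (((φ t - φ 0) / t : ℝ) : EReal)) (𝓝[>] 0) (𝓝 (a : EReal)) := by
    refine EReal.tendsto_coe.2 <| (hasDerivAt_iff_tendsto_slope.1 hφ).mono_left
      (nhdsWithin_mono _ fun t ht => ne_of_gt ht) |>.congr fun t => ?_
    rw [slope_def_field, sub_zero]
  have hsum := (EReal.continuousAt_add (p := ((a : EReal), L)) (Or.inl (EReal.coe_ne_top a))
    (Or.inl (EReal.coe_ne_bot a))).tendsto.comp (hφa.prodMk_nhds hqL)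
  refine ⟨a + L, hsum.congr fun t => ?_, ?_⟩
  · simp only [Function.comp_apply, ← EReal.coe_add]
    congr 1
    ring
  · rw [EReal.coe_add]
    exact add_le_add_right hLle _

theorem exists_pow_slope_lt {r : ℝ → ℝ} {L : EReal} {c β : ℝ}
    (hr : Tendsto (fun t => (((r t - r 0) / t : ℝ) : EReal)) (𝓝[>] 0) (𝓝 L))
    (hLc : L < c) (hβ0 : 0 < β) (hβ1 : β < 1) :
    ∃ M : ℕ, r (β ^ M) - r 0 < c * β ^ M := by
  obtain ⟨M, hM⟩ := ((tendsto_pow_atTop_nhdsWithin_zero_of_lt_one hβ0 hβ1).eventually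
    (hr.eventually_lt_const hLc)).exists
  exact ⟨M, (div_lt_iff₀ (pow_pos hβ0 M)).1 (EReal.coe_lt_coe_iff.1 hM)⟩

/-- Lemma 3.1, line-search part. If
`⟨∇f(x), y - x⟩ + g(y) - g(x) ≤ -(μ/2)‖y - x‖²` for `x, y ∈ dom g` with `d = y - x ≠ 0`,
then the one-sided directional derivative `F'(x; d)` (as an extended real limit) satisfies
`F'(x; d) ≤ -(μ/2)‖d‖² < 0`, and the Armijo condition
`F(x) - F(x + βᵐ d) ≥ σ βᵐ μ ‖d‖²` holds for some nonnegative integer `m`. -/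
theorem statement7 {n m : ℕ} (ψ : Eu m → ℝ) (gradψ : Eu m → Eu m)
    (hessψ : Eu m → (Eu m →L[ℝ] Eu m)) (A : Eu n →L[ℝ] Eu m) (b : Eu m)
    (g : Eu n → EReal) (prox : Eu n → Eu n) (O : Set (Eu n))
    (hbasic : BasicAssumptions ψ gradψ hessψ A b g prox O)
    (x yy : Eu n) (hx : x ∈ domg g) (hy : yy ∈ domg g)
    (d : Eu n) (hd : d = yy - x) (hdne : d ≠ 0)
    (μ σ β : ℝ) (hμ : 0 < μ) (hσ : 0 < σ ∧ σ < 1/2) (hβ : 0 < β ∧ β < 1)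
    (hdec : ((⟪gradfval gradψ A b x, yy - x⟫ : ℝ) : EReal) + g yy
        ≤ g x + ((-(μ/2) * ‖yy - x‖ ^ 2 : ℝ) : EReal)) :
    (∃ Fd : EReal,
        Tendsto (fun t : ℝ =>
            (Fval ψ A b g (x + t • d) - Fval ψ A b g x) * (((1/t : ℝ)) : EReal))
          (nhdsWithin 0 (Set.Ioi 0)) (nhds Fd) ∧
        Fd ≤ ((-(μ/2) * ‖d‖ ^ 2 : ℝ) : EReal) ∧
        ((-(μ/2) * ‖d‖ ^ 2 : ℝ) : EReal) < 0) ∧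
    ∃ M : ℕ, ArmijoOK ψ A b g σ β μ x d M := by
  obtain ⟨-, hdomO, ⟨hgrad, -⟩, ⟨-, hbot⟩, hconv, -⟩ := hbasic
  have hyd : x + d = yy := by rw [hd, add_sub_cancel]
  set q : ℝ → ℝ := fun t => (g (x + t • d)).toReal
  set r : ℝ → ℝ := fun t => fval ψ A b (x + t • d) + q t
  have hgq : ∀ t ∈ Icc (0 : ℝ) 1, g (x + t • d) = q t := fun t ht =>
    (EReal.coe_toReal (hconv.ne_top_add_smul hbot hx (hyd ▸ hy) ht) (hbot _)).symm
  have hFr : ∀ t ∈ Icc (0 : ℝ) 1, Fval ψ A b g (x + t • d) = r t := fun t ht => by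
    rw [Fval, hgq t ht, EReal.coe_add]
  have hFr0 : Fval ψ A b g x = r 0 := by simpa using hFr 0 ⟨le_rfl, zero_le_one⟩
  have hdecR : ⟪gradfval gradψ A b x, d⟫ + (q 1 - q 0) ≤ -(μ/2) * ‖d‖ ^ 2 := by
    have hq0 : g x = q 0 := by simpa using hgq 0 ⟨le_rfl, zero_le_one⟩
    have hq1 : g yy = q 1 := by simpa [hyd] using hgq 1 ⟨zero_le_one, le_rfl⟩
    rw [hq0, hq1, ← hd, ← EReal.coe_add, ← EReal.coe_add, EReal.coe_le_coe_iff] at hdec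
    linarith
  have hneg : -(μ/2) * ‖d‖ ^ 2 < 0 := by
    have := pow_pos (norm_pos_iff.2 hdne) 2
    nlinarith
  obtain ⟨L, hL, hLle⟩ := HasDerivAt.exists_tendsto_slope_add_le
    (hasDerivAt_fval_line d (hgrad _ ⟨x, hdomO hx, rfl⟩))
    (hconv.convexOn_toReal_line hbot hx (hyd ▸ hy))
  refine ⟨⟨L, hL.congr' ?_, hLle.trans (EReal.coe_le_coe_iff.2 hdecR),
    EReal.coe_lt_coe_iff.2 hneg⟩, ?_⟩
  · filter_upwards [Ioo_mem_nhdsGT_of_mem ⟨le_rfl, zero_lt_one⟩] with t ht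
    rw [hFr t (Ioo_subset_Icc_self ht), hFr0, ← EReal.coe_sub, ← EReal.coe_mul,
      ← div_eq_mul_one_div]
  obtain ⟨M, hM⟩ := exists_pow_slope_lt (r := r) (c := -(σ * μ * ‖d‖ ^ 2)) hL
    (hLle.trans_lt (EReal.coe_lt_coe_iff.2 (by nlinarith))) hβ.1 hβ.2
  refine ⟨M, ?_⟩
  rw [ArmijoOK, hFr _ ⟨(pow_pos hβ.1 M).le, pow_le_one₀ hβ.1.le hβ.2.le⟩, hFr0,
    ← EReal.coe_add, EReal.coe_le_coe_iff]
  linarith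

end
end
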